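/- Let (x_1, x_2) be a random vector and Y = f(x_1,x_2) square-integrable, measurable with respect to σ(x_1,x_2), with variance σ² > 0. Let φ_1, φ_2 be the Shapley values of the game val(u) = Var(E[Y | x_u]) on {1,2}. Then: (i) φ_1/σ² = (1/2)(1 + (Var(E[Y|x_1]) − Var(E[Y|x_2]))/σ²); (ii) φ_1/σ² = (1/2)(1 + (E[Var(Y|x_2)] − E[Var(Y|x_1)])/σ²); and (iii) φ_1/φ_2 = (Var(E[Y|x_1]) + E[Var(Y|x_2)]) / (Var(E[Y|x_2]) + E[Var(Y|x_1)]) provided the denominator is nonzero. -/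

import Mathlib

open Finset MeasureTheory ProbabilityTheory

/-- The Shapley value of player `j` for the cooperative game `val` on subsets of `Fin d`. -/
noncomputable def shapley {d : ℕ} (val : Finset (Fin d) → ℝ) (j : Fin d) : ℝ :=
  (d : ℝ)⁻¹ * ∑ u ∈ (Finset.univ.erase j).powerset,
    ((Nat.choose (d - 1) u.card : ℝ))⁻¹ * (val (insert j u) - val u)

/-- The σ-algebra generated by the variables `x j`, `j ∈ u`. -/
def mGen {Ω : Type*} {d : ℕ} (x : Fin d → Ω → ℝ) (u : Finset (Fin d)) :
    MeasurableSpace Ω :=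
  ⨆ j ∈ u, MeasurableSpace.comap (x j) Real.measurableSpace

/-- The conditional variance of `Y` given the σ-algebra `m`, as a function on `Ω`. -/
noncomputable def condVar {Ω : Type*} [MeasurableSpace Ω] (μ : Measure Ω)
    (m : MeasurableSpace Ω) (Y : Ω → ℝ) : Ω → ℝ :=
  μ[fun ω => (Y ω - (μ[Y | m]) ω) ^ 2 | m]

/-!
With `σ² = Var Y`, the game `val u = Var(E[Y ∣ x_u])` has `val ∅ = 0` and, as `Y` is
`σ(x₀, x₁)`-measurable, `val {0, 1} = σ²`; so the two Shapley values are
`(σ² ± (val {0} - val {1})) / 2`. The three formulas follow by algebra once the law of total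
variance `Var(E[Y ∣ x_j]) + E[Var(Y ∣ x_j)] = σ²` trades each `val {j}` for `σ² - E[Var(Y ∣ x_j)]`.
-/

lemma shapley_fin_two_zero (val : Finset (Fin 2) → ℝ) :
    shapley val 0 = (val {0} - val ∅ + val univ - val {1}) / 2 := by
  rw [shapley, show (univ.erase (0 : Fin 2)).powerset = {∅, {1}} by decide,
    sum_pair (by decide), show insert (0 : Fin 2) ({1} : Finset (Fin 2)) = univ by decide]
  simp only [card_empty, card_singleton, Nat.add_one_sub_one, Nat.choose_zero_right,
    Nat.choose_self, Nat.cast_one, inv_one, one_mul, insert_empty_eq]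
  ring

lemma shapley_fin_two_one (val : Finset (Fin 2) → ℝ) :
    shapley val 1 = (val {1} - val ∅ + val univ - val {0}) / 2 := by
  rw [shapley, show (univ.erase (1 : Fin 2)).powerset = {∅, {0}} by decide,
    sum_pair (by decide), show insert (1 : Fin 2) ({0} : Finset (Fin 2)) = univ by decide]
  simp only [card_empty, card_singleton, Nat.add_one_sub_one, Nat.choose_zero_right,
    Nat.choose_self, Nat.cast_one, inv_one, one_mul, insert_empty_eq]
  ring

section

variable {Ω : Type*} {m m0 : MeasurableSpace Ω} {μ : Measure[m0] Ω} {Y : Ω → ℝ}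

lemma mGen_empty {d : ℕ} (x : Fin d → Ω → ℝ) : mGen x ∅ = ⊥ := by
  simp [mGen]

lemma mGen_le {d : ℕ} {x : Fin d → Ω → ℝ} (hx : ∀ j, Measurable (x j)) (u : Finset (Fin d)) :
    mGen x u ≤ m0 :=
  iSup₂_le fun j _ => (hx j).comap_le

lemma variance_condExp_bot [IsProbabilityMeasure μ] : variance (μ[Y | ⊥]) μ = 0 := by
  simp [condExp_bot, variance_eq_integral]

-- `condVar μ m Y` is definitionally Mathlib's `Var[Y; μ | m]`.
lemma integral_condVar_eq_variance_sub_variance_condExp [IsProbabilityMeasure μ] (hm : m ≤ m0)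
    (hY : MemLp Y 2 μ) : ∫ ω, condVar μ m Y ω ∂μ = variance Y μ - variance (μ[Y | m]) μ :=
  eq_sub_of_add_eq (integral_condVar_add_variance_condExp hm hY)

end

/-- Bivariate formulas for Shapley effects: with `d = 2` and the game
`val u = Var(E[Y ∣ x_u])`, the Shapley value `φ₁` of variable `1` satisfies
`φ₁/σ² = (1/2)(1 + (Var(E[Y∣x₁]) - Var(E[Y∣x₂]))/σ²)
       = (1/2)(1 + (E[Var(Y∣x₂)] - E[Var(Y∣x₁)])/σ²)`, and
`φ₁/φ₂ = (Var(E[Y∣x₁]) + E[Var(Y∣x₂)])/(Var(E[Y∣x₂]) + E[Var(Y∣x₁)])`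
whenever the denominator is nonzero. -/
theorem shapley_bivariate
    {Ω : Type*} [m0 : MeasurableSpace Ω] (μ : Measure Ω) [IsProbabilityMeasure μ]
    (x : Fin 2 → Ω → ℝ) (hx : ∀ j, Measurable (x j))
    (Y : Ω → ℝ) (hY2 : MemLp Y 2 μ)
    (hYmeas : Measurable[mGen x Finset.univ] Y)
    (hσ : 0 < variance Y μ) :
    shapley (fun u => variance (μ[Y | mGen x u]) μ) 0 / variance Y μ
        = (1 / 2) * (1 + (variance (μ[Y | mGen x {0}]) μ
            - variance (μ[Y | mGen x {1}]) μ) / variance Y μ) ∧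
      shapley (fun u => variance (μ[Y | mGen x u]) μ) 0 / variance Y μ
        = (1 / 2) * (1 + ((∫ ω, condVar μ (mGen x {1}) Y ω ∂μ)
            - ∫ ω, condVar μ (mGen x {0}) Y ω ∂μ) / variance Y μ) ∧
      (variance (μ[Y | mGen x {1}]) μ + (∫ ω, condVar μ (mGen x {0}) Y ω ∂μ) ≠ 0 →
        shapley (fun u => variance (μ[Y | mGen x u]) μ) 0
            / shapley (fun u => variance (μ[Y | mGen x u]) μ) 1
          = (variance (μ[Y | mGen x {0}]) μ + ∫ ω, condVar μ (mGen x {1}) Y ω ∂μ)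
            / (variance (μ[Y | mGen x {1}]) μ + ∫ ω, condVar μ (mGen x {0}) Y ω ∂μ)) := by
  have hval_empty : variance (μ[Y | mGen x ∅]) μ = 0 := by
    rw [mGen_empty, variance_condExp_bot]
  have hval_univ : variance (μ[Y | mGen x univ]) μ = variance Y μ := by
    rw [condExp_of_stronglyMeasurable (mGen_le hx univ) hYmeas.stronglyMeasurable
      (hY2.integrable one_le_two)]
  rw [shapley_fin_two_zero, shapley_fin_two_one, hval_empty, hval_univ,
    integral_condVar_eq_variance_sub_variance_condExp (mGen_le hx {0}) hY2,
    integral_condVar_eq_variance_sub_variance_condExp (mGen_le hx {1}) hY2]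
  refine ⟨?_, ?_, fun _ => ?_⟩
  · field_simp
    ring
  · field_simp
    ring
  · rw [div_div_div_cancel_right₀ two_ne_zero]
    congr 1 <;> ring
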